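/- Let N ≥ 1, D = N+1, and let J⁺, J⁻ ∈ M_D(ℂ) be the spin-(N/2) ladder matrices. Set B = (N!)^{-3/2} (J⁺)^N and L(x) = f(x) J⁻ for f : ℝ → ℂ. Then for every k ≥ 0, Tr(B · L(x₁) ⋯ L(x_k)) = 0 if k ≠ N, and Tr(B · L(x₁) ⋯ L(x_N)) = √(N!) · f(x₁) ⋯ f(x_N). -/
import Mathlib


open Matrix

/-- The spin-(N/2) raising matrix: `(J⁺)_{m+1,m} = √((m+1)(N−m))`. -/
noncomputable def Jplus (N : ℕ) : Matrix (Fin (N + 1)) (Fin (N + 1)) ℂ :=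
  Matrix.of fun i j =>
    if (i : ℕ) = (j : ℕ) + 1 then
      ((Real.sqrt (((j : ℕ) + 1) * (N - (j : ℕ))) : ℝ) : ℂ) else 0

/-- The spin-(N/2) lowering matrix: `(J⁻)_{m−1,m} = √(m(N−m+1))`. -/
noncomputable def Jminus (N : ℕ) : Matrix (Fin (N + 1)) (Fin (N + 1)) ℂ :=
  Matrix.of fun i j =>
    if (i : ℕ) + 1 = (j : ℕ) then
      ((Real.sqrt ((j : ℕ) * (N - (j : ℕ) + 1)) : ℝ) : ℂ) else 0

noncomputable def ladderG (N t : ℕ) : ℝ := Real.sqrt ((t:ℝ) * ((N:ℝ) - (t:ℝ) + 1))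

lemma Jm_pow_apply (N : ℕ) : ∀ (k : ℕ) (i j : Fin (N + 1)),
    ((Jminus N) ^ k) i j =
      if (i : ℕ) + k = (j : ℕ) then
        ((∏ s ∈ Finset.range k, ladderG N ((i:ℕ)+s+1) : ℝ) : ℂ)
      else 0 := by
  intro k
  induction k with
  | zero =>
    intro i j
    simp only [pow_zero, Matrix.one_apply, Nat.add_zero, Finset.range_zero,
      Finset.prod_empty, Complex.ofReal_one]
    by_cases h : i = j
    · simp [h]
    · rw [if_neg h, if_neg (fun hc => h (Fin.ext hc))]
  | succ k ih =>
    intro i j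
    rw [pow_succ', Matrix.mul_apply]
    by_cases h : (i:ℕ) + 1 ≤ N
    · have hmlt : (i:ℕ) + 1 < N + 1 := by omega
      rw [Finset.sum_eq_single (⟨(i:ℕ)+1, hmlt⟩ : Fin (N+1))]
      · have hval : ((⟨(i:ℕ)+1, hmlt⟩ : Fin (N+1)) : ℕ) = (i:ℕ)+1 := rfl
        have h1 : Jminus N i ⟨(i:ℕ)+1, hmlt⟩ = ((ladderG N ((i:ℕ)+1) : ℝ) : ℂ) := by
          simp only [Jminus, Matrix.of_apply, hval, if_pos rfl, ladderG]
          push_cast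
          ring_nf
        rw [h1, ih]
        rw [hval]
        by_cases hc : (i:ℕ) + (k+1) = (j:ℕ)
        · have hc' : (i:ℕ) + 1 + k = (j:ℕ) := by omega
          rw [if_pos hc, if_pos hc', ← Complex.ofReal_mul]
          congr 1
          rw [Finset.prod_range_succ', mul_comm]
          congr 1
          refine Finset.prod_congr rfl fun s _ => ?_
          have h2 : (i:ℕ) + 1 + s + 1 = (i:ℕ) + (s+1) + 1 := by omega
          rw [h2]
        · have hc' : ¬ ((i:ℕ) + 1 + k = (j:ℕ)) := by omega
          rw [if_neg hc, if_neg hc', mul_zero]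
      · intro b _ hb
        have : ¬ ((i:ℕ) + 1 = (b:ℕ)) := fun hcon => hb (Fin.ext hcon.symm)
        simp [Jminus, this]
      · simp
    · have hz : ∀ b : Fin (N+1), Jminus N i b = 0 := by
        intro b
        have hb : (b:ℕ) < N + 1 := b.isLt
        have : ¬ ((i:ℕ) + 1 = (b:ℕ)) := by omega
        simp [Jminus, this]
      simp only [hz, zero_mul, Finset.sum_const_zero]
      have : ¬ ((i:ℕ) + (k+1) = (j:ℕ)) := by
        have := j.isLt; omega
      rw [if_neg this]

lemma Jplus_eq_transpose (N : ℕ) : Jplus N = (Jminus N)ᵀ := by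
  ext i j
  simp only [Jplus, Jminus, Matrix.transpose_apply, Matrix.of_apply]
  by_cases h : (i:ℕ) = (j:ℕ) + 1
  · rw [if_pos h, if_pos h.symm, h]
    push_cast
    ring_nf
  · rw [if_neg h, if_neg (fun hc => h hc.symm)]

lemma prod_ladderG_sq (N : ℕ) :
    (∏ s ∈ Finset.range N, ladderG N (s+1)) ^ 2 = ((N.factorial * N.factorial : ℕ) : ℝ) := by
  rw [← Finset.prod_pow]
  have h1 : ∀ s ∈ Finset.range N, (ladderG N (s+1)) ^ 2 = (((s+1) * (N-s) : ℕ) : ℝ) := by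
    intro s hs
    rw [Finset.mem_range] at hs
    have hnn : (0:ℝ) ≤ ((s+1:ℕ):ℝ) * ((N:ℝ) - ((s+1:ℕ):ℝ) + 1) := by
      have h' : ((s+1:ℕ):ℝ) ≤ (N:ℝ) := by exact_mod_cast hs
      have h1 : (0:ℝ) ≤ ((s+1:ℕ):ℝ) := by positivity
      nlinarith
    rw [ladderG, Real.sq_sqrt hnn]
    have hsub : ((N - s : ℕ) : ℝ) = (N:ℝ) - (s:ℝ) := by
      rw [Nat.cast_sub (by omega)]
    push_cast [hsub]
    ring
  rw [Finset.prod_congr rfl h1, ← Nat.cast_prod]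
  congr 1
  rw [Finset.prod_mul_distrib]
  congr 1
  · exact Finset.prod_range_add_one_eq_factorial N
  · rw [← Finset.prod_range_add_one_eq_factorial N, ← Finset.prod_range_reflect]
    refine Finset.prod_congr rfl fun s hs => ?_
    rw [Finset.mem_range] at hs
    omega

lemma trace_Jp_Jm (N k : ℕ) :
    Matrix.trace ((Jplus N) ^ N * (Jminus N) ^ k)
      = if k = N then (((N.factorial * N.factorial : ℕ) : ℝ) : ℂ) else 0 := by
  rw [Jplus_eq_transpose, ← Matrix.transpose_pow]
  unfold Matrix.trace
  simp only [Matrix.diag_apply, Matrix.mul_apply, Matrix.transpose_apply, Jm_pow_apply]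
  by_cases hk : k = N
  · subst hk
    rw [if_pos rfl]
    have hlast : (k:ℕ) < k + 1 := by omega
    rw [Finset.sum_eq_single (⟨k, hlast⟩ : Fin (k+1))]
    · rw [Finset.sum_eq_single (⟨0, by omega⟩ : Fin (k+1))]
      · have hv0 : ((⟨0, by omega⟩ : Fin (k+1)) : ℕ) = 0 := rfl
        have hvl : ((⟨k, hlast⟩ : Fin (k+1)) : ℕ) = k := rfl
        rw [hv0, hvl]
        simp only [Nat.zero_add]
        rw [if_pos trivial, ← Complex.ofReal_mul, ← pow_two, prod_ladderG_sq]
      · intro b _ hb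
        have : ¬ ((b:ℕ) + k = ((⟨k, hlast⟩ : Fin (k+1)) : ℕ)) := by
          have hbv : (b:ℕ) ≠ 0 := fun hc => hb (Fin.ext hc)
          have hvl : ((⟨k, hlast⟩ : Fin (k+1)) : ℕ) = k := rfl
          omega
        rw [if_neg this, zero_mul]
      · simp
    · intro b _ hb
      apply Finset.sum_eq_zero
      intro j _
      by_cases hcond : (j:ℕ) + k = (b:ℕ)
      · exfalso
        have hj : (j:ℕ) < k + 1 := j.isLt
        have hbv : (b:ℕ) < k + 1 := b.isLt
        have : (b:ℕ) ≠ k := fun hc => hb (Fin.ext hc)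
        omega
      · rw [if_neg hcond, zero_mul]
    · simp
  · rw [if_neg hk]
    apply Finset.sum_eq_zero
    intro i _
    apply Finset.sum_eq_zero
    intro j _
    by_cases h1 : (j:ℕ) + N = (i:ℕ)
    · by_cases h2 : (j:ℕ) + k = (i:ℕ)
      · omega
      · rw [if_neg h2, mul_zero]
    · rw [if_neg h1, zero_mul]

lemma list_ofFn_smul_prod {D : Type*} [Fintype D] [DecidableEq D] :
    ∀ (k : ℕ) (c : Fin k → ℂ) (A : Matrix D D ℂ),
      (List.ofFn fun i : Fin k => c i • A).prod = (∏ i, c i) • A ^ k := by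
  intro k
  induction k with
  | zero => intro c A; simp
  | succ k ih =>
    intro c A
    rw [List.ofFn_succ, List.prod_cons, ih (fun i => c i.succ) A, Fin.prod_univ_succ]
    rw [smul_mul_assoc, mul_smul_comm, smul_smul, pow_succ']

/-- with `B = (N!)^{-3/2} (J⁺)^N` and `L(x) = f(x) J⁻`, the
matrix-product coefficients satisfy `Tr(B L(x₁) ⋯ L(x_k)) = 0` for `k ≠ N` and
`Tr(B L(x₁) ⋯ L(x_N)) = √(N!) f(x₁) ⋯ f(x_N)`. -/
theorem single_mode_Fock_cmps_coefficients (N : ℕ) (hN : 1 ≤ N) (f : ℝ → ℂ)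
    (B : Matrix (Fin (N + 1)) (Fin (N + 1)) ℂ)
    (hB : B = (((N.factorial : ℝ) ^ (-(3 : ℝ) / 2) : ℝ) : ℂ) • (Jplus N) ^ N)
    (L : ℝ → Matrix (Fin (N + 1)) (Fin (N + 1)) ℂ)
    (hL : ∀ x, L x = f x • Jminus N) :
    ∀ (k : ℕ) (x : Fin k → ℝ),
      Matrix.trace (B * (List.ofFn fun i : Fin k => L (x i)).prod)
        = if k = N then ((Real.sqrt N.factorial : ℝ) : ℂ) * ∏ i, f (x i) else 0 := by
  intro k x
  simp only [hL]
  rw [list_ofFn_smul_prod k (fun i => f (x i)) (Jminus N), hB]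
  rw [smul_mul_assoc, mul_smul_comm, Matrix.trace_smul, Matrix.trace_smul, trace_Jp_Jm]
  by_cases hk : k = N
  · rw [if_pos hk, if_pos hk]
    have hfac : ((N.factorial : ℝ) ^ (-(3 : ℝ) / 2)) * ((N.factorial * N.factorial : ℕ) : ℝ)
        = Real.sqrt N.factorial := by
      have hpos : (0:ℝ) < (N.factorial : ℝ) := by
        exact_mod_cast N.factorial_pos
      have h2 : ((N.factorial * N.factorial : ℕ) : ℝ) = (N.factorial : ℝ) ^ (2:ℝ) := by
        push_cast
        rw [Real.rpow_two]
        ring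
      rw [h2, ← Real.rpow_add hpos, Real.sqrt_eq_rpow]
      norm_num
    calc (((N.factorial : ℝ) ^ (-(3 : ℝ) / 2) : ℝ) : ℂ) •
          ((∏ i, f (x i)) • (((N.factorial * N.factorial : ℕ) : ℝ) : ℂ))
        = ((((N.factorial : ℝ) ^ (-(3 : ℝ) / 2)) * ((N.factorial * N.factorial : ℕ) : ℝ) : ℝ) : ℂ)
            * ∏ i, f (x i) := by
          simp only [smul_eq_mul, Complex.ofReal_mul]
          ring
      _ = ((Real.sqrt N.factorial : ℝ) : ℂ) * ∏ i, f (x i) := by rw [hfac]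
  · rw [if_neg hk, if_neg hk]
    simp
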